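/- Let P₁,…,Pₙ be pairwise distinct pure states on ℂ^d with n ≥ 2, and suppose there exist positive real numbers t₁,…,tₙ with ∑_{j=1}^n t_j P_j = I. Then P₁,…,Pₙ are antidistinguishable. -/

import Mathlib

open Matrix BigOperators
open scoped ComplexOrder

/-- A state (density matrix) on ℂ^d: positive semidefinite (hence Hermitian) with trace 1. -/
def IsState {d : ℕ} (ρ : Matrix (Fin d) (Fin d) ℂ) : Prop :=
  ρ.PosSemidef ∧ ρ.trace = 1

/-- A POVM with outcomes 1,…,n. -/
def IsPOVM {d n : ℕ} (M : Fin n → Matrix (Fin d) (Fin d) ℂ) : Prop :=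
  (∀ j, (M j).PosSemidef) ∧ ∑ j, M j = 1

/-- States are distinguishable if some POVM identifies each with certainty. -/
def Distinguishable {d n : ℕ} (ρ : Fin n → Matrix (Fin d) (Fin d) ℂ) : Prop :=
  ∃ M : Fin n → Matrix (Fin d) (Fin d) ℂ, IsPOVM M ∧ ∀ j, (ρ j * M j).trace = 1

/-- States are antidistinguishable if some POVM excludes each with certainty,
with every outcome occurring for at least one state. -/
def Antidistinguishable {d n : ℕ} (ρ : Fin n → Matrix (Fin d) (Fin d) ℂ) : Prop :=
  ∃ M : Fin n → Matrix (Fin d) (Fin d) ℂ, IsPOVM M ∧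
    ∀ j, (ρ j * M j).trace = 0 ∧ ∑ k, (ρ k * M j).trace ≠ 0

/-- A pure state on ℂ^d: a rank-one orthogonal projection. -/
def IsPureState {d : ℕ} (P : Matrix (Fin d) (Fin d) ℂ) : Prop :=
  P.IsHermitian ∧ P * P = P ∧ P.trace = 1

/-! Take `M j = t j / (d - 1) • (1 - P j)`. Taking traces in `∑ t j • P j = 1` gives `∑ t j = d`,
so the `M j` sum to `1`, and `P j * M j = 0`. Every outcome occurs: the summands `tr (P k * M j)`
are nonnegative and `∑ t k * tr (P k * M j) = tr (M j) = t j > 0`. Injectivity and `2 ≤ n` serve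
only to rule out `d ≤ 1`, where all pure states coincide, so that `d - 1 > 0`. -/

open scoped MatrixOrder

namespace Matrix

variable {ι n 𝕜 : Type*} [Fintype ι] [Fintype n] [RCLike 𝕜]

theorem PosSemidef.trace_mul_nonneg {A B : Matrix n n 𝕜} (hA : A.PosSemidef)
    (hB : B.PosSemidef) : 0 ≤ (A * B).trace := by
  classical
  obtain ⟨X, rfl⟩ := CStarAlgebra.nonneg_iff_eq_star_mul_self.mp hA.nonneg
  rw [star_eq_conjTranspose, mul_assoc, trace_mul_comm]
  exact (hB.mul_mul_conjTranspose_same X).trace_nonneg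

theorem sum_eq_card_of_sum_smul_eq_one [DecidableEq n] {t : ι → 𝕜} {A : ι → Matrix n n 𝕜}
    (htr : ∀ i, (A i).trace = 1) (hsum : ∑ i, t i • A i = 1) : ∑ i, t i = Fintype.card n := by
  simpa [trace_sum, htr] using congrArg trace hsum

theorem sum_trace_mul_ne_zero_of_sum_smul_eq_one [DecidableEq n] {t : ι → 𝕜}
    {A : ι → Matrix n n 𝕜} (hA : ∀ i, (A i).PosSemidef) (hsum : ∑ i, t i • A i = 1)
    {B : Matrix n n 𝕜} (hB : B.PosSemidef) (htrB : B.trace ≠ 0) :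
    ∑ i, (A i * B).trace ≠ 0 := by
  intro h
  have hzero : ∀ i ∈ Finset.univ, (A i * B).trace = 0 :=
    (Finset.sum_eq_zero_iff_of_nonneg fun i _ => (hA i).trace_mul_nonneg hB).mp h
  apply htrB
  calc B.trace = ((∑ i, t i • A i) * B).trace := by rw [hsum, one_mul]
    _ = ∑ i, t i * (A i * B).trace := by simp [Finset.sum_mul, trace_sum]
    _ = 0 := Finset.sum_eq_zero fun i hi => by rw [hzero i hi, mul_zero]

end Matrix

namespace IsPureState

variable {d : ℕ} {P : Matrix (Fin d) (Fin d) ℂ}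

theorem isStarProjection (hP : IsPureState P) : IsStarProjection P :=
  ⟨hP.2.1, hP.1⟩

theorem posSemidef (hP : IsPureState P) : P.PosSemidef :=
  hP.isStarProjection.nonneg.posSemidef

theorem posSemidef_one_sub (hP : IsPureState P) : (1 - P).PosSemidef :=
  hP.isStarProjection.one_sub_nonneg.posSemidef

end IsPureState

theorem two_le_of_injective_of_trace_eq_one {d n : ℕ} (hn : 2 ≤ n)
    {P : Fin n → Matrix (Fin d) (Fin d) ℂ} (htr : ∀ j, (P j).trace = 1)
    (hinj : Function.Injective P) : 2 ≤ d := by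
  obtain _ | _ | d := d
  · simpa using htr ⟨0, by omega⟩
  · have h01 : P ⟨0, by omega⟩ = P ⟨1, by omega⟩ := by
      ext i k
      fin_cases i; fin_cases k
      simpa [trace_fin_one] using (htr _).trans (htr _).symm
    simpa using hinj h01
  · omega

noncomputable def complementPOVM {d n : ℕ} (t : Fin n → ℝ)
    (P : Fin n → Matrix (Fin d) (Fin d) ℂ) (j : Fin n) : Matrix (Fin d) (Fin d) ℂ :=
  ((t j / (d - 1) : ℝ) : ℂ) • (1 - P j)

section complementPOVM

theorem natCast_sub_one_ne_zero {d : ℕ} (hd : 2 ≤ d) : (d : ℂ) - 1 ≠ 0 := by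
  rw [sub_ne_zero]
  exact_mod_cast (by omega : d ≠ 1)

variable {d n : ℕ} {t : Fin n → ℝ} {P : Fin n → Matrix (Fin d) (Fin d) ℂ}

theorem mul_complementPOVM_self {j : Fin n} (hP : IsPureState (P j)) :
    P j * complementPOVM t P j = 0 := by
  rw [complementPOVM, mul_smul_comm, mul_sub, mul_one, hP.2.1, sub_self, smul_zero]

theorem trace_complementPOVM (hd : 2 ≤ d) {j : Fin n} (hP : IsPureState (P j)) :
    (complementPOVM t P j).trace = t j := by
  have hd' := natCast_sub_one_ne_zero hd
  rw [complementPOVM, trace_smul, trace_sub, trace_one, hP.2.2, Fintype.card_fin, smul_eq_mul]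
  push_cast
  field_simp

theorem isPOVM_complementPOVM (hd : 2 ≤ d) (hP : ∀ j, IsPureState (P j)) (ht : ∀ j, 0 ≤ t j)
    (hsum : ∑ j, (t j : ℂ) • P j = 1) : IsPOVM (complementPOVM t P) := by
  refine ⟨fun j => (hP j).posSemidef_one_sub.smul ?_, ?_⟩
  · have : (0 : ℝ) ≤ d - 1 := by rw [sub_nonneg]; exact_mod_cast (by omega : 1 ≤ d)
    exact_mod_cast div_nonneg (ht j) this
  · have htsum := Matrix.sum_eq_card_of_sum_smul_eq_one (fun j => (hP j).2.2) hsum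
    have hd' := natCast_sub_one_ne_zero hd
    calc ∑ j, complementPOVM t P j
        = ((d : ℂ) - 1)⁻¹ • ((∑ j, (t j : ℂ)) • 1 - ∑ j, (t j : ℂ) • P j) := by
          simp only [complementPOVM, smul_sub, Finset.sum_sub_distrib, Finset.sum_smul,
            Finset.smul_sum, smul_smul]
          push_cast
          simp only [div_eq_inv_mul]
      _ = 1 := by
        rw [htsum, hsum, Fintype.card_fin]
        nth_rewrite 2 [← one_smul ℂ (1 : Matrix (Fin d) (Fin d) ℂ)]
        rw [← sub_smul, inv_smul_smul₀ hd']

end complementPOVM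

/-- if ∑ t_j P_j = I for some positive reals t_j, then the pairwise
distinct pure states P_j (n ≥ 2) are antidistinguishable. -/
theorem antidistinguishable_of_sum_eq_id {d n : ℕ} (hn : 2 ≤ n)
    (P : Fin n → Matrix (Fin d) (Fin d) ℂ) (hP : ∀ j, IsPureState (P j))
    (hinj : Function.Injective P) (t : Fin n → ℝ) (ht : ∀ j, 0 < t j)
    (hsum : ∑ j, (t j : ℂ) • P j = 1) :
    Antidistinguishable P := by
  have hd := two_le_of_injective_of_trace_eq_one hn (fun j => (hP j).2.2) hinj
  have hM := isPOVM_complementPOVM hd hP (fun j => (ht j).le) hsum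
  refine ⟨complementPOVM t P, hM, fun j => ⟨?_, ?_⟩⟩
  · rw [mul_complementPOVM_self (hP j), trace_zero]
  · refine Matrix.sum_trace_mul_ne_zero_of_sum_smul_eq_one (fun k => (hP k).posSemidef) hsum
      (hM.1 j) ?_
    rw [trace_complementPOVM hd (hP j)]
    exact_mod_cast (ht j).ne'
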